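/- Upper bound for the Calderón–Zygmund capacity from an a.e. potential bound: suppose s ∈ (d−1, d) and Φ(t) = exp(−1/t^β) for a suitable β = β(s,d) > 0. Assume the following two facts: (i) (weak-type potential bound) there is A > 1 depending only on s,d such that every nonnegative measure μ with ||R(μ)||_{L^∞(m_d)} ≤ 1 satisfies μ({x : W_{Φ,s}(μ)(x) > A}) ≤ μ(R^d)/4; (ii) the maximum principle and the capacity-level comparison cap^{(A)} ≈ cap^{(1)} hold for Φ. Then there is a constant C > 0 depending only on s, d such that γ_s(E) ≤ C · cap_{Φ,s}(E) for every compact set E ⊂ R^d, where γ_s(E) = sup{μ(E) : supp μ ⊂ E, ||R(μ)||_{L^∞} ≤ 1} and R(μ)(x) = ∫ (y−x)/|y−x|^{1+s} dμ(y). -/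

import Mathlib

open MeasureTheory Metric Set
open scoped ENNReal

/-- The `s`-dimensional Riesz transform of a measure. -/
noncomputable def rieszTransform (d : ℕ) (s : ℝ)
    (μ : Measure (EuclideanSpace ℝ (Fin d))) (x : EuclideanSpace ℝ (Fin d)) :
    EuclideanSpace ℝ (Fin d) :=
  ∫ y, (‖y - x‖ ^ (1 + s))⁻¹ • (y - x) ∂μ

/-- The exponential gauge `Φ(t) = e^{-1/t^β}` (with `Φ(0) = 0`). -/
noncomputable def expGauge (β t : ℝ) : ℝ :=
  if t ≤ 0 then 0 else Real.exp (-(1 / t ^ β))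

/-- The `s`-dimensional Wolff potential with gauge `Φ`. -/
noncomputable def wolffPotential (d : ℕ) (s : ℝ) (Φ : ℝ → ℝ)
    (μ : Measure (EuclideanSpace ℝ (Fin d))) (x : EuclideanSpace ℝ (Fin d)) : ℝ≥0∞ :=
  ∫⁻ r in Set.Ioi (0 : ℝ), ENNReal.ofReal (Φ ((μ (ball x r)).toReal / r ^ s) / r)

/-- The support of a measure. -/
def measSupport (d : ℕ) (μ : Measure (EuclideanSpace ℝ (Fin d))) :
    Set (EuclideanSpace ℝ (Fin d)) :=
  {x | ∀ ε : ℝ, 0 < ε → 0 < μ (ball x ε)}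

/-- The nonlinear capacity at level `A` associated to the gauge `Φ`. -/
noncomputable def capPhiLevel (d : ℕ) (s : ℝ) (Φ : ℝ → ℝ) (A : ℝ)
    (E : Set (EuclideanSpace ℝ (Fin d))) : ℝ≥0∞ :=
  sSup {m : ℝ≥0∞ | ∃ μ : Measure (EuclideanSpace ℝ (Fin d)), IsFiniteMeasure μ ∧
    μ Eᶜ = 0 ∧ (∀ x, wolffPotential d s Φ μ x ≤ ENNReal.ofReal A) ∧ m = μ E}

/-- The `s`-dimensional Calderón–Zygmund capacity. -/
noncomputable def czCapacity (d : ℕ) (s : ℝ)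
    (E : Set (EuclideanSpace ℝ (Fin d))) : ℝ≥0∞ :=
  sSup {m : ℝ≥0∞ | ∃ μ : Measure (EuclideanSpace ℝ (Fin d)), IsFiniteMeasure μ ∧
    μ Eᶜ = 0 ∧ (∀ᵐ x ∂(volume : Measure (EuclideanSpace ℝ (Fin d))),
      ‖rieszTransform d s μ x‖ ≤ 1) ∧ m = μ E}

/-!
Let `μ` be admissible for `γ_s(E)`. By the weak-type bound, the set `T = {W_{Φ,s}(μ) ≤ A}`
carries at least three quarters of the mass of `μ`, so `ω = μ|_T` has `μ(E) ≤ 2 ω(E)`. Since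
`Φ` is continuous and increasing, `W_{Φ,s}(μ)` is lower semicontinuous, hence `T` is closed and
contains the support of `ω`; there `W_{Φ,s}(ω) ≤ W_{Φ,s}(μ) ≤ A`. The maximum principle makes
`2^{-s} ω` admissible for `cap^{(A)}(E)`, and the level comparison bounds this by `C₀ cap^{(1)}(E)`.
-/

open Filter Topology

section ExpGauge

variable {β : ℝ}

lemma monotone_expGauge (hβ : 0 < β) : Monotone (expGauge β) := by
  intro a b hab
  unfold expGauge
  split_ifs with ha hb hb
  · exact le_rfl
  · exact (Real.exp_pos _).le
  · exact absurd (hab.trans hb) ha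
  · gcongr
    exacts [Real.rpow_pos_of_pos (not_le.1 ha) β, not_le.1 ha |>.le]

lemma tendsto_expGauge_nhdsGT_zero (hβ : 0 < β) :
    Tendsto (expGauge β) (𝓝[>] 0) (𝓝 0) := by
  have hpow : Tendsto (fun t : ℝ => 1 / t ^ β) (𝓝[>] 0) atTop := by
    refine (tendsto_rpow_neg_nhdsGT_zero (neg_lt_zero.2 hβ)).congr' ?_
    filter_upwards [self_mem_nhdsWithin] with t (ht : 0 < t)
    rw [Real.rpow_neg ht.le, one_div]
  refine (Real.tendsto_exp_neg_atTop_nhds_zero.comp hpow).congr' ?_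
  filter_upwards [self_mem_nhdsWithin] with t (ht : 0 < t)
  simp [expGauge, not_le.2 ht]

lemma continuous_expGauge (hβ : 0 < β) : Continuous (expGauge β) := by
  refine continuous_iff_continuousAt.2 fun t => ?_
  rcases lt_trichotomy t 0 with ht | rfl | ht
  · refine continuousAt_const.congr (f := fun _ => (0 : ℝ)) ?_
    filter_upwards [Iio_mem_nhds ht] with u (hu : u < 0)
    simp [expGauge, hu.le]
  · refine continuousAt_iff_continuous_left_right.2 ⟨?_, ?_⟩
    · refine (continuousWithinAt_const (b := (0 : ℝ))).congr (fun u (hu : u ≤ 0) => ?_) ?_ <;>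
        simp [expGauge, *]
    · rw [← continuousWithinAt_Ioi_iff_Ici]
      simpa [ContinuousWithinAt, expGauge] using tendsto_expGauge_nhdsGT_zero hβ
  · have hcont : ContinuousAt (fun u : ℝ => Real.exp (-(1 / u ^ β))) t := by
      have := Real.continuousAt_rpow_const t β (Or.inl ht.ne')
      fun_prop (disch := exact (Real.rpow_pos_of_pos ht β).ne')
    refine hcont.congr ?_
    filter_upwards [Ioi_mem_nhds ht] with u (hu : 0 < u)
    simp [expGauge, not_le.2 hu]

end ExpGauge

theorem lowerSemicontinuous_lintegral {X α : Type*} [TopologicalSpace X] [FirstCountableTopology X]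
    [MeasurableSpace α] {ν : Measure α} {f : X → α → ℝ≥0∞}
    (hf : ∀ᵐ a ∂ν, LowerSemicontinuous (f · a)) (hmeas : ∀ x, AEMeasurable (f x) ν) :
    LowerSemicontinuous fun x => ∫⁻ a, f x a ∂ν :=
  lowerSemicontinuous_iff_le_liminf.2 fun x =>
    (lintegral_mono_ae (hf.mono fun _ ha => ha.le_liminf x)).trans (lintegral_liminf_le' hmeas)

theorem lowerSemicontinuous_measure_ball {X : Type*} [PseudoMetricSpace X] [MeasurableSpace X]
    [OpensMeasurableSpace X] (μ : Measure X) (r : ℝ) :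
    LowerSemicontinuous fun x => μ (ball x r) := by
  have hsymm : ∀ x y, (ball y r).indicator (1 : X → ℝ≥0∞) x = (ball x r).indicator 1 y :=
    fun x y => by simp only [indicator, mem_ball, dist_comm, Pi.one_apply]
  have hball : (fun x => μ (ball x r)) = fun x => ∫⁻ y, (ball y r).indicator 1 x ∂μ := by
    funext x
    simp only [hsymm x, lintegral_indicator_one measurableSet_ball]
  rw [hball]
  refine lowerSemicontinuous_lintegral
    (ae_of_all _ fun y => isOpen_ball.lowerSemicontinuous_indicator zero_le) fun x => ?_
  simp only [hsymm x]
  exact (measurable_one.indicator measurableSet_ball).aemeasurable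

section WolffPotential

variable {d : ℕ} {s : ℝ} {Φ : ℝ → ℝ}

theorem measurable_wolffIntegrand (hΦ : Continuous Φ) (μ : Measure (EuclideanSpace ℝ (Fin d)))
    (x : EuclideanSpace ℝ (Fin d)) :
    Measurable fun r : ℝ => ENNReal.ofReal (Φ ((μ (ball x r)).toReal / r ^ s) / r) := by
  have hball : Measurable fun r : ℝ => μ (ball x r) :=
    Monotone.measurable fun _ _ h => measure_mono (ball_subset_ball h)
  exact ENNReal.measurable_ofReal.comp
    ((hΦ.measurable.comp (hball.ennreal_toReal.div (by fun_prop))).div measurable_id)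

theorem lowerSemicontinuous_wolffIntegrand (hΦc : Continuous Φ) (hΦm : Monotone Φ)
    (μ : Measure (EuclideanSpace ℝ (Fin d))) [IsFiniteMeasure μ] {r : ℝ} (hr : 0 < r) :
    LowerSemicontinuous fun x => ENNReal.ofReal (Φ ((μ (ball x r)).toReal / r ^ s) / r) := by
  have hμ : μ univ ≠ ∞ := measure_ne_top μ univ
  -- `toReal` is not monotone at `∞`; truncating at the finite total mass repairs this.
  set g : ℝ≥0∞ → ℝ≥0∞ := fun a =>
    ENNReal.ofReal (Φ (ENNReal.truncateToReal (μ univ) a / r ^ s) / r)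
  have hg : Continuous g := ENNReal.continuous_ofReal.comp
    ((hΦc.comp ((ENNReal.continuous_truncateToReal hμ).div_const _)).div_const _)
  have hgm : Monotone g := fun a b hab => by
    have hrs : 0 < r ^ s := Real.rpow_pos_of_pos hr s
    dsimp only [g]
    gcongr
    exact hΦm (by gcongr; exact ENNReal.monotone_truncateToReal hμ hab)
  have hgμ : ∀ x, g (μ (ball x r)) = ENNReal.ofReal (Φ ((μ (ball x r)).toReal / r ^ s) / r) :=
    fun x => by
      dsimp only [g]
      rw [ENNReal.truncateToReal_eq_toReal hμ (measure_mono (subset_univ _))]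
  simpa only [Function.comp_def, hgμ] using
    hg.comp_lowerSemicontinuous (lowerSemicontinuous_measure_ball μ r) hgm

theorem lowerSemicontinuous_wolffPotential (hΦc : Continuous Φ) (hΦm : Monotone Φ)
    (μ : Measure (EuclideanSpace ℝ (Fin d))) [IsFiniteMeasure μ] :
    LowerSemicontinuous (wolffPotential d s Φ μ) :=
  lowerSemicontinuous_lintegral
    ((ae_restrict_iff' measurableSet_Ioi).2 (ae_of_all _ fun _ hr =>
      lowerSemicontinuous_wolffIntegrand hΦc hΦm μ hr))
    fun x => (measurable_wolffIntegrand hΦc μ x).aemeasurable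

theorem wolffPotential_mono_measure (hΦ : Monotone Φ)
    {μ ν : Measure (EuclideanSpace ℝ (Fin d))} [IsFiniteMeasure ν] (h : μ ≤ ν)
    (x : EuclideanSpace ℝ (Fin d)) :
    wolffPotential d s Φ μ x ≤ wolffPotential d s Φ ν x := by
  refine setLIntegral_mono' measurableSet_Ioi fun r (hr : 0 < r) => ?_
  have hrs : 0 < r ^ s := Real.rpow_pos_of_pos hr s
  gcongr
  exact hΦ (by gcongr; exact measure_ne_top ν _)

theorem measSupport_restrict_subset_closure (μ : Measure (EuclideanSpace ℝ (Fin d)))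
    (T : Set (EuclideanSpace ℝ (Fin d))) : measSupport d (μ.restrict T) ⊆ closure T := by
  intro x hx
  refine Metric.mem_closure_iff.2 fun ε hε => ?_
  have hpos := hx ε hε
  rw [Measure.restrict_apply measurableSet_ball] at hpos
  obtain ⟨y, hyx, hyT⟩ := nonempty_of_measure_ne_zero hpos.ne'
  exact ⟨y, hyT, mem_ball'.1 hyx⟩

theorem isClosed_setOf_wolffPotential_le (hΦc : Continuous Φ) (hΦm : Monotone Φ)
    (μ : Measure (EuclideanSpace ℝ (Fin d))) [IsFiniteMeasure μ] (c : ℝ≥0∞) :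
    IsClosed {x | wolffPotential d s Φ μ x ≤ c} :=
  (lowerSemicontinuous_wolffPotential hΦc hΦm μ).isClosed_preimage c

theorem wolffPotential_restrict_le_of_mem_measSupport (hΦc : Continuous Φ) (hΦm : Monotone Φ)
    (μ : Measure (EuclideanSpace ℝ (Fin d))) [IsFiniteMeasure μ] (c : ℝ≥0∞)
    {x : EuclideanSpace ℝ (Fin d)}
    (hx : x ∈ measSupport d (μ.restrict {y | wolffPotential d s Φ μ y ≤ c})) :
    wolffPotential d s Φ (μ.restrict {y | wolffPotential d s Φ μ y ≤ c}) x ≤ c :=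
  (wolffPotential_mono_measure hΦm Measure.restrict_le_self x).trans
    ((isClosed_setOf_wolffPotential_le hΦc hΦm μ c).closure_subset
      (measSupport_restrict_subset_closure μ _ hx))

theorem le_capPhiLevel {A : ℝ} {E : Set (EuclideanSpace ℝ (Fin d))}
    {μ : Measure (EuclideanSpace ℝ (Fin d))} [IsFiniteMeasure μ] (hE : μ Eᶜ = 0)
    (hW : ∀ x, wolffPotential d s Φ μ x ≤ ENNReal.ofReal A) :
    μ E ≤ capPhiLevel d s Φ A E :=
  le_sSup ⟨μ, inferInstance, hE, hW, rfl⟩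

end WolffPotential

theorem measure_univ_le_two_mul_of_measure_compl_le {X : Type*} [MeasurableSpace X]
    {μ : Measure X} [IsFiniteMeasure μ] {T : Set X} (hT : MeasurableSet T)
    (h : μ Tᶜ ≤ μ univ / 4) : μ univ ≤ 2 * μ T := by
  have hsplit : μ univ ≤ μ T + μ univ / 4 :=
    (measure_add_measure_compl hT).ge.trans (by gcongr)
  rw [← ENNReal.toReal_le_toReal (by finiteness) (by finiteness)] at hsplit ⊢
  rw [ENNReal.toReal_add (by finiteness) (by finiteness), ENNReal.toReal_div] at hsplit
  rw [ENNReal.toReal_mul]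
  simp only [ENNReal.toReal_ofNat] at hsplit ⊢
  linarith [ENNReal.toReal_nonneg (a := μ T)]

theorem czCapacity_le_capPhi_general
    (d : ℕ) (s : ℝ)
    (β : ℝ) (hβ : 0 < β)
    (A : ℝ) (hA : 1 < A)
    (hweak : ∀ μ : Measure (EuclideanSpace ℝ (Fin d)), IsFiniteMeasure μ →
      (∀ᵐ x ∂(volume : Measure (EuclideanSpace ℝ (Fin d))),
        ‖rieszTransform d s μ x‖ ≤ 1) →
      μ {x | ENNReal.ofReal A < wolffPotential d s (expGauge β) μ x} ≤
        μ Set.univ / 4)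
    (hmax : ∀ μ : Measure (EuclideanSpace ℝ (Fin d)), IsFiniteMeasure μ →
      ∀ A' : ℝ, 0 < A' →
      (∀ x ∈ measSupport d μ,
        wolffPotential d s (expGauge β) μ x ≤ ENNReal.ofReal A') →
      ∀ x, wolffPotential d s (expGauge β)
          (ENNReal.ofReal ((2 : ℝ) ^ (-s)) • μ) x ≤ ENNReal.ofReal A')
    (C₀ : ℝ) (hC₀ : 0 < C₀)
    (hcomp : ∀ E : Set (EuclideanSpace ℝ (Fin d)), IsCompact E →
      capPhiLevel d s (expGauge β) A E ≤
        ENNReal.ofReal C₀ * capPhiLevel d s (expGauge β) 1 E) :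
    ∃ C : ℝ, 0 < C ∧ ∀ E : Set (EuclideanSpace ℝ (Fin d)), IsCompact E →
      czCapacity d s E ≤ ENNReal.ofReal C * capPhiLevel d s (expGauge β) 1 E := by
  refine ⟨2 * 2 ^ s * C₀, by positivity, fun E hE => sSup_le ?_⟩
  rintro _ ⟨μ, hμ, hμE, hR, rfl⟩
  have hΦc := continuous_expGauge hβ
  have hΦm := monotone_expGauge hβ
  set T := {x | wolffPotential d s (expGauge β) μ x ≤ ENNReal.ofReal A}
  set ω := μ.restrict T
  have hμω : μ E ≤ 2 * ω E := by
    have hTc : μ Tᶜ ≤ μ univ / 4 := by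
      simpa only [T, compl_ofPred, not_le] using hweak μ hμ hR
    rw [measure_congr (ae_eq_univ.2 hμE), Measure.restrict_apply hE.measurableSet, inter_comm,
      measure_inter_conull hμE]
    exact measure_univ_le_two_mul_of_measure_compl_le
      (isClosed_setOf_wolffPotential_le hΦc hΦm μ _).measurableSet hTc
  have hωcap : ENNReal.ofReal (2 ^ (-s)) * ω E ≤ capPhiLevel d s (expGauge β) A E := by
    have := ω.smul_finite (ENNReal.ofReal_ne_top (r := 2 ^ (-s)))
    have hωE : ω Eᶜ = 0 := Measure.absolutelyContinuous_of_le Measure.restrict_le_self hμE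
    simpa using le_capPhiLevel (by simp [hωE]) (hmax ω inferInstance A (by linarith)
      fun x => wolffPotential_restrict_le_of_mem_measSupport hΦc hΦm μ _)
  have h2 : ENNReal.ofReal (2 ^ s) * ENNReal.ofReal (2 ^ (-s)) = 1 := by
    rw [← ENNReal.ofReal_mul (by positivity), ← Real.rpow_add two_pos, add_neg_cancel,
      Real.rpow_zero, ENNReal.ofReal_one]
  calc μ E ≤ 2 * ω E := hμω
    _ = 2 * ENNReal.ofReal (2 ^ s) * (ENNReal.ofReal (2 ^ (-s)) * ω E) := by
      rw [mul_assoc 2, ← mul_assoc _ _ (ω E), h2, one_mul]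
    _ ≤ 2 * ENNReal.ofReal (2 ^ s) *
          (ENNReal.ofReal C₀ * capPhiLevel d s (expGauge β) 1 E) := by
      gcongr _ * ?_
      exact hωcap.trans (hcomp E hE)
    _ = ENNReal.ofReal (2 * 2 ^ s * C₀) * capPhiLevel d s (expGauge β) 1 E := by
      rw [ENNReal.ofReal_mul (by positivity), ENNReal.ofReal_mul (by positivity),
        ENNReal.ofReal_ofNat]
      ring

/-- Upper bound for the Calderón–Zygmund capacity in terms of the nonlinear
capacity with exponential gauge, assuming the weak-type potential bound, the
maximum principle, and the capacity-level comparison. -/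
theorem czCapacity_le_capPhi
    (d : ℕ) (hd : 2 ≤ d) (s : ℝ) (hs : s ∈ Set.Ioo ((d : ℝ) - 1) d)
    (β : ℝ) (hβ : 0 < β)
    (A : ℝ) (hA : 1 < A)
    (hweak : ∀ μ : Measure (EuclideanSpace ℝ (Fin d)), IsFiniteMeasure μ →
      (∀ᵐ x ∂(volume : Measure (EuclideanSpace ℝ (Fin d))),
        ‖rieszTransform d s μ x‖ ≤ 1) →
      μ {x | ENNReal.ofReal A < wolffPotential d s (expGauge β) μ x} ≤
        μ Set.univ / 4)
    (hmax : ∀ μ : Measure (EuclideanSpace ℝ (Fin d)), IsFiniteMeasure μ →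
      ∀ A' : ℝ, 0 < A' →
      (∀ x ∈ measSupport d μ,
        wolffPotential d s (expGauge β) μ x ≤ ENNReal.ofReal A') →
      ∀ x, wolffPotential d s (expGauge β)
          (ENNReal.ofReal ((2 : ℝ) ^ (-s)) • μ) x ≤ ENNReal.ofReal A')
    (C₀ : ℝ) (hC₀ : 0 < C₀)
    (hcomp : ∀ E : Set (EuclideanSpace ℝ (Fin d)), IsCompact E →
      capPhiLevel d s (expGauge β) A E ≤
        ENNReal.ofReal C₀ * capPhiLevel d s (expGauge β) 1 E) :
    ∃ C : ℝ, 0 < C ∧ ∀ E : Set (EuclideanSpace ℝ (Fin d)), IsCompact E →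
      czCapacity d s E ≤ ENNReal.ofReal C * capPhiLevel d s (expGauge β) 1 E :=
  czCapacity_le_capPhi_general d s β hβ A hA hweak hmax C₀ hC₀ hcomp
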